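/- arXiv:1501.05031 — 6 statements merged into one kernel-verified Lean document; each statement's English description precedes it below -/
import Mathlib

section
/- Adding a never-strictly-worst act does not change safety: if h is an act such that for every state s there exists a' ∈ M with a'(s) ≤ h(s), then for every act f ∈ M, safety_{M ∪ {h}}(f) = safety_M(f). Consequently, the maximin-safety preference between any two acts f, g ∈ M is unchanged by adding h (the INWA property). -/
open Finset

noncomputable def safety {S : Type*} [Fintype S] [Nonempty S]
    (M : Finset (S → ℝ)) (hM : M.Nonempty) (f : S → ℝ) : ℝ :=
  univ.inf' univ_nonempty (fun s => f s - M.inf' hM (fun a => a s))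

theorem safety_INWA {S : Type*} [Fintype S] [Nonempty S] [DecidableEq (S → ℝ)]
    (M : Finset (S → ℝ)) (hM : M.Nonempty) (h : S → ℝ)
    (hnw : ∀ s : S, ∃ a' ∈ M, a' s ≤ h s) :
    (∀ f ∈ M, safety (insert h M) (insert_nonempty h M) f = safety M hM f) ∧
    (∀ f ∈ M, ∀ g ∈ M,
      (safety (insert h M) (insert_nonempty h M) f > safety (insert h M) (insert_nonempty h M) g ↔
        safety M hM f > safety M hM g)) := by
  have key : ∀ f : S → ℝ, safety (insert h M) (insert_nonempty h M) f = safety M hM f := by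
    intro f
    unfold safety
    congr 1
    funext s
    congr 1
    rw [inf'_insert]
    obtain ⟨a', ha', hle⟩ := hnw s
    exact min_eq_right ((inf'_le _ ha').trans hle)
  exact ⟨fun f _ => key f, fun f _ g _ => by rw [key f, key g]⟩
end

section
/- Maximin safety does NOT satisfy independence of dominated alternatives: there exist a finite state space S, acts a₁, a₂, and a decoy act a₃ dominated by a₁ (a₃(s) < a₁(s) for all s), such that safety_{{a₁,a₂}}(a₁) = safety_{{a₁,a₂}}(a₂) but safety_{{a₁,a₂,a₃}}(a₁) > safety_{{a₁,a₂,a₃}}(a₂). (E.g., with S = {s₁,s₂}, a₁ = (4,4), a₂ = (2,6), a₃ = (3,3).) -/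
open Finset

theorem safety_violates_IDA :
    ∃ (a₁ a₂ a₃ : Fin 2 → ℝ),
      (∀ s, a₃ s < a₁ s) ∧
      safety {a₁, a₂} (insert_nonempty _ _) a₁ = safety {a₁, a₂} (insert_nonempty _ _) a₂ ∧
      safety {a₁, a₂, a₃} (insert_nonempty _ _) a₁ > safety {a₁, a₂, a₃} (insert_nonempty _ _) a₂ := by
  refine ⟨![4,4], ![2,6], ![3,3], ?_, ?_, ?_⟩
  · intro s; fin_cases s <;> norm_num
  all_goals
    simp only [safety, show (univ : Finset (Fin 2)) = {0, 1} by decide,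
      inf'_insert, inf'_singleton]
    norm_num [Matrix.cons_val_zero, Matrix.cons_val_one]
end

section
/- Adding an asymmetrically dominated decoy can reverse a strict maximin-safety preference: there exist a finite state space S (with 3 states), acts a₁,a₂,a₃ with menu M = {a₁,a₂,a₃} satisfying safety_M(a₂) > safety_M(a₃), and an act a₄ dominated by a₃ such that safety_{M∪{a₄}}(a₃) > safety_{M∪{a₄}}(a₂). (E.g., a₁=(9,2,6), a₂=(5,3,7), a₃=(4,8,8), a₄=(1,5,6).) -/
open Finset

/-! With a₁ = (9,2,6), a₂ = (5,3,7), a₃ = (4,8,8) the statewise worst payoffs are (4,2,6),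
so a₂ has safety 1 while a₃, which is itself the worst act in state 0, has safety 0.
The decoy a₄ = (1,5,6) lowers the worst payoff in state 0 to 1: this lifts a₃'s margin there
from 0 to 3, making its safety 2, while a₂'s binding margins in states 1 and 2 stay at 1. -/

lemma safety_fin_three (M : Finset (Fin 3 → ℝ)) (hM : M.Nonempty) (f : Fin 3 → ℝ) :
    safety M hM f = min (f 0 - M.inf' hM (· 0))
      (min (f 1 - M.inf' hM (· 1)) (f 2 - M.inf' hM (· 2))) := by
  have huniv : (univ : Finset (Fin 3)) = {0, 1, 2} := by decide
  simp only [safety, huniv, inf'_insert, inf'_singleton, insert_nonempty, singleton_nonempty]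

theorem decoy_reverses_safety_preference :
    ∃ (a₁ a₂ a₃ a₄ : Fin 3 → ℝ),
      (∀ s, a₄ s < a₃ s) ∧
      safety {a₁, a₂, a₃} (insert_nonempty _ _) a₂ > safety {a₁, a₂, a₃} (insert_nonempty _ _) a₃ ∧
      safety {a₁, a₂, a₃, a₄} (insert_nonempty _ _) a₃ >
        safety {a₁, a₂, a₃, a₄} (insert_nonempty _ _) a₂ := by
  refine ⟨![9, 2, 6], ![5, 3, 7], ![4, 8, 8], ![1, 5, 6], ?_, ?_, ?_⟩
  · intro s
    fin_cases s <;> norm_num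
  all_goals
    simp only [safety_fin_three, inf'_insert, inf'_singleton, insert_nonempty, singleton_nonempty]
    norm_num [Matrix.cons_val_two, Matrix.vecHead, Matrix.vecTail]
end

section
/- The maximin-safety value function satisfies the menu-dependent independence axiom: for all acts f, g, h, menus M with f,g ∈ M, and p ∈ (0,1), safety_M(f) ≥ safety_M(g) if and only if safety_{pM+(1-p)h}(pf+(1-p)h) ≥ safety_{pM+(1-p)h}(pg+(1-p)h), where pM+(1-p)h = {pa+(1-p)h : a ∈ M} and acts combine pointwise. -/
open Finset

lemma inf'_affine {ι : Type*} (s : Finset ι) (hs : s.Nonempty) (g : ι → ℝ)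
    (p c : ℝ) (hp : 0 ≤ p) :
    s.inf' hs (fun i => p * g i + c) = p * s.inf' hs g + c := by
  apply le_antisymm
  · obtain ⟨i, hi, hieq⟩ := Finset.exists_mem_eq_inf' hs g
    calc s.inf' hs (fun i => p * g i + c) ≤ p * g i + c := Finset.inf'_le _ hi
    _ = p * s.inf' hs g + c := by rw [hieq]
  · apply Finset.le_inf'
    intro i hi
    have := Finset.inf'_le g hi
    nlinarith

lemma safety_mix {S : Type*} [Fintype S] [Nonempty S]
    (M : Finset (S → ℝ)) (hM : M.Nonempty) (f h : S → ℝ)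
    (p : ℝ) (hp0 : 0 < p) :
    safety (M.image (fun a => fun s => p * a s + (1 - p) * h s)) (hM.image _)
      (fun s => p * f s + (1 - p) * h s) = p * safety M hM f := by
  unfold safety
  have key : ∀ s : S, (M.image (fun a => fun s => p * a s + (1 - p) * h s)).inf'
      (hM.image _) (fun a => a s) = p * M.inf' hM (fun a => a s) + (1 - p) * h s := by
    intro s
    rw [inf'_image]
    exact inf'_affine M hM (fun a => a s) p ((1 - p) * h s) hp0.le
  have : (fun s => (fun s => p * f s + (1 - p) * h s) s -
      (M.image (fun a => fun s => p * a s + (1 - p) * h s)).inf' (hM.image _) (fun a => a s))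
      = fun s => p * (f s - M.inf' hM (fun a => a s)) + 0 := by
    funext s; rw [key s]; ring
  rw [this, inf'_affine _ _ _ p 0 hp0.le, add_zero]

theorem safety_independence {S : Type*} [Fintype S] [Nonempty S]
    (M : Finset (S → ℝ)) (hM : M.Nonempty) (f g h : S → ℝ) (hf : f ∈ M) (hg : g ∈ M)
    (p : ℝ) (hp0 : 0 < p) (hp1 : p < 1) :
    safety M hM f ≥ safety M hM g ↔
      safety (M.image (fun a => fun s => p * a s + (1 - p) * h s)) (hM.image _)
          (fun s => p * f s + (1 - p) * h s) ≥
        safety (M.image (fun a => fun s => p * a s + (1 - p) * h s)) (hM.image _)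
          (fun s => p * g s + (1 - p) * h s) := by
  rw [safety_mix M hM f h p hp0, safety_mix M hM g h p hp0]
  constructor <;> intro H <;> nlinarith
end

section
/- Maximin safety satisfies the symmetry axiom: let E, F ⊆ S be disjoint nonempty events such that every act in finite menu M is constant on E and constant on F. Define the swap operation f ↦ f' where f'(s) = f(s_E) for s ∈ F, f'(s) = f(s_F) for s ∈ E (for representatives s_E ∈ E, s_F ∈ F), and f'(s) = f(s) otherwise, and let M' = {f' : f ∈ M}. Then for all f, g ∈ M, safety_M(f) ≥ safety_M(g) iff safety_{M'}(f') ≥ safety_{M'}(g'). -/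
open Finset

lemma safety_swap_eq {S : Type*} [Fintype S] [Nonempty S] [DecidableEq S]
    (M : Finset (S → ℝ)) (hM : M.Nonempty) (E F : Finset S)
    (hE : E.Nonempty) (hF : F.Nonempty) (hdisj : Disjoint E F)
    (sE : S) (hsE : sE ∈ E) (sF : S) (hsF : sF ∈ F)
    (hconstE : ∀ a ∈ M, ∀ s ∈ E, a s = a sE)
    (hconstF : ∀ a ∈ M, ∀ s ∈ F, a s = a sF)
    (swap : (S → ℝ) → (S → ℝ))
    (hswap : ∀ a : S → ℝ, ∀ s : S,
      swap a s = if s ∈ F then a sE else if s ∈ E then a sF else a s)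
    (f : S → ℝ) (hf : f ∈ M) :
    safety (M.image swap) (hM.image swap) (swap f) = safety M hM f := by
  set D : S → ℝ := fun s => f s - M.inf' hM (fun a => a s) with hD
  have hinf : ∀ s : S, (M.image swap).inf' (hM.image swap) (fun a => a s)
      = M.inf' hM (fun a => swap a s) := by
    intro s
    exact Finset.inf'_image (hM.image swap) (fun a => a s)
  -- description of the new difference function
  have hDE : ∀ s ∈ E, D s = D sE := by
    intro s hs
    simp only [hD]
    rw [hconstE f hf s hs, Finset.inf'_congr hM rfl (fun a ha => hconstE a ha s hs)]
  have hDF : ∀ s ∈ F, D s = D sF := by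
    intro s hs
    simp only [hD]
    rw [hconstF f hf s hs, Finset.inf'_congr hM rfl (fun a ha => hconstF a ha s hs)]
  have hnew : ∀ s : S, swap f s - (M.image swap).inf' (hM.image swap) (fun a => a s)
      = if s ∈ F then D sE else if s ∈ E then D sF else D s := by
    intro s
    rw [hinf, hswap f s]
    by_cases hsF' : s ∈ F
    · simp only [hsF', if_true]
      congr 1
      exact Finset.inf'_congr hM rfl (fun a ha => by rw [hswap a s]; simp [hsF'])
    · by_cases hsE' : s ∈ E
      · simp only [hsF', if_false, hsE', if_true]
        congr 1
        exact Finset.inf'_congr hM rfl (fun a ha => by rw [hswap a s]; simp [hsF', hsE'])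
      · simp only [hsF', if_false, hsE', if_false]
        congr 1
        exact Finset.inf'_congr hM rfl (fun a ha => by rw [hswap a s]; simp [hsF', hsE'])
  unfold safety
  rw [Finset.inf'_congr univ_nonempty rfl (fun s _ => hnew s)]
  apply le_antisymm
  · apply Finset.le_inf'
    intro s _
    by_cases h1 : s ∈ F
    · show _ ≤ D s
      rw [hDF s h1]
      refine Finset.inf'_le_of_le _ (mem_univ sE) ?_
      have hne : sE ∉ F := fun h => (Finset.disjoint_left.mp hdisj hsE) h
      simp [hne, hsE]
    · by_cases h2 : s ∈ E
      · show _ ≤ D s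
        rw [hDE s h2]
        refine Finset.inf'_le_of_le _ (mem_univ sF) ?_
        simp [hsF]
      · show _ ≤ D s
        refine Finset.inf'_le_of_le _ (mem_univ s) ?_
        simp [h1, h2]
  · apply Finset.le_inf'
    intro s _
    by_cases h1 : s ∈ F
    · simp only [h1, if_true]
      exact Finset.inf'_le _ (mem_univ sE)
    · by_cases h2 : s ∈ E
      · simp only [h1, if_false, h2, if_true]
        exact Finset.inf'_le _ (mem_univ sF)
      · simp only [h1, if_false, h2, if_false]
        exact Finset.inf'_le _ (mem_univ s)

theorem safety_symmetry {S : Type*} [Fintype S] [Nonempty S] [DecidableEq S]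
    (M : Finset (S → ℝ)) (hM : M.Nonempty) (E F : Finset S)
    (hE : E.Nonempty) (hF : F.Nonempty) (hdisj : Disjoint E F)
    (sE : S) (hsE : sE ∈ E) (sF : S) (hsF : sF ∈ F)
    (hconstE : ∀ a ∈ M, ∀ s ∈ E, a s = a sE)
    (hconstF : ∀ a ∈ M, ∀ s ∈ F, a s = a sF)
    (swap : (S → ℝ) → (S → ℝ))
    (hswap : ∀ a : S → ℝ, ∀ s : S,
      swap a s = if s ∈ F then a sE else if s ∈ E then a sF else a s)
    (f g : S → ℝ) (hf : f ∈ M) (hg : g ∈ M) :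
    safety M hM f ≥ safety M hM g ↔
      safety (M.image swap) (hM.image swap) (swap f) ≥
        safety (M.image swap) (hM.image swap) (swap g) := by
  rw [safety_swap_eq M hM E F hE hF hdisj sE hsE sF hsF hconstE hconstF swap hswap f hf,
    safety_swap_eq M hM E F hE hF hdisj sE hsE sF hsF hconstE hconstF swap hswap g hg]
end

section
/- There exists a decision problem where the four rules all select distinct acts: with S = {s₁,s₂} and acts a₁=(1,9), a₂=(3,6), a₃=(2,7), a₄=(4,4), menu M = {a₁,a₂,a₃,a₄}: a₁ uniquely maximizes max_s U, a₄ uniquely maximizes min_s U, a₃ uniquely minimizes reg_M, and a₂ uniquely maximizes safety_M. -/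
open Finset

noncomputable def reg {S : Type*} [Fintype S] [Nonempty S]
    (M : Finset (S → ℝ)) (hM : M.Nonempty) (f : S → ℝ) : ℝ :=
  univ.sup' univ_nonempty (fun s => M.sup' hM (fun a => a s) - f s)

theorem four_rules_distinct :
    ∃ (a₁ a₂ a₃ a₄ : Fin 2 → ℝ) (M : Finset (Fin 2 → ℝ)) (hM : M.Nonempty),
      a₁ = ![1, 9] ∧ a₂ = ![3, 6] ∧ a₃ = ![2, 7] ∧ a₄ = ![4, 4] ∧
      M = {a₁, a₂, a₃, a₄} ∧
      (∀ b ∈ M, b ≠ a₁ → univ.sup' univ_nonempty b < univ.sup' univ_nonempty a₁) ∧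
      (∀ b ∈ M, b ≠ a₄ → univ.inf' univ_nonempty b < univ.inf' univ_nonempty a₄) ∧
      (∀ b ∈ M, b ≠ a₃ → reg M hM a₃ < reg M hM b) ∧
      (∀ b ∈ M, b ≠ a₂ → safety M hM b < safety M hM a₂) := by
  refine ⟨![1,9], ![3,6], ![2,7], ![4,4], {![1,9], ![3,6], ![2,7], ![4,4]},
    by simp, rfl, rfl, rfl, rfl, rfl, ?_, ?_, ?_, ?_⟩ <;>
  · intro b hb hne
    have huniv : (univ : Finset (Fin 2)) = {0, 1} := rfl
    simp only [mem_insert, mem_singleton] at hb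
    rcases hb with rfl | rfl | rfl | rfl <;>
      first
      | exact absurd rfl hne
      | (simp only [reg, safety, huniv, sup'_insert, sup'_singleton, inf'_insert,
          inf'_singleton, Matrix.cons_val_zero, Matrix.cons_val_one, Matrix.head_cons]
         norm_num)
end
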